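/- If g : [0,1] → ℝ is integrable, not a.e. zero, and ∫_0^1 x^j g(x) dx = 0 for j = 0,...,s, then g has more than s sign changes: for any points 0 < t_1 < ... < t_l < 1 with l ≤ s, g does not keep a.e. constant (weakly alternating) sign on the intervals determined by the t_i. -/

import Mathlib

/-!
Suppose `g` had at most `l ≤ s` sign changes, at `t 1 < ⋯ < t l`. The polynomial
`(-1)^l ε ∏ (X - t j)` has degree `l ≤ s` and changes sign exactly where `g` does, so its
product with `g` is a.e. nonnegative on `[0,1]`, while its integral vanishes because all
moments of `g` up to order `s` do. Hence the product vanishes a.e., and so does `g`, since a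
nonzero polynomial has only finitely many roots.
-/

open MeasureTheory Polynomial Set

theorem exists_mem_Ioo_of_notMem_range {α : Type*} [LinearOrder α] (t : ℕ → α) {x : α}
    (hx : x ∉ range t) :
    ∀ n, t 0 < x → x < t (n + 1) → ∃ i ≤ n, x ∈ Ioo (t i) (t (i + 1)) := by
  intro n
  induction n with
  | zero => exact fun h0 h1 => ⟨0, le_rfl, h0, h1⟩
  | succ n ih =>
    intro h0 h1
    rcases lt_or_gt_of_ne fun h => hx ⟨n + 1, h.symm⟩ with hlt | hgt
    · obtain ⟨i, hi, hxi⟩ := ih h0 hlt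
      exact ⟨i, by omega, hxi⟩
    · exact ⟨n + 1, le_rfl, hgt, h1⟩

theorem neg_one_pow_sub_mul_prod_sub_pos {R : Type*} [CommRing R] [LinearOrder R]
    [IsStrictOrderedRing R] {t : ℕ → R} {l i : ℕ} (ht : MonotoneOn t (Iic l)) (hil : i ≤ l)
    {x : R} (hx : x ∈ Ioo (t i) (t (i + 1))) :
    0 < (-1) ^ (l - i) * ∏ j ∈ Finset.range l, (x - t (j + 1)) := by
  have hleft : 0 < ∏ j ∈ Finset.range i, (x - t (j + 1)) :=
    Finset.prod_pos fun j hj => by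
      have hji : j + 1 ≤ i := Finset.mem_range.1 hj
      have := ht (by simp; omega) (by simpa using hil) hji
      linarith [hx.1]
  have hright : 0 < ∏ j ∈ Finset.Ico i l, (t (j + 1) - x) :=
    Finset.prod_pos fun j hj => by
      obtain ⟨hij, hjl⟩ := Finset.mem_Ico.1 hj
      have := ht (by simp; omega) (by simp; omega) (by omega : i + 1 ≤ j + 1)
      linarith [hx.2]
  calc (0 : R) < (∏ j ∈ Finset.range i, (x - t (j + 1))) * ∏ j ∈ Finset.Ico i l, (t (j + 1) - x) :=
        mul_pos hleft hright
    _ = _ := by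
      rw [← Finset.prod_range_mul_prod_Ico _ hil, ← Nat.card_Ico, mul_left_comm, ← Finset.prod_neg]
      simp only [neg_sub]

theorem integral_eval_mul_eq_zero_of_moments {μ : Measure ℝ} {g : ℝ → ℝ} {s : ℕ} {P : ℝ[X]}
    (hP : P.natDegree ≤ s) (hint : ∀ j ≤ s, Integrable (fun x => x ^ j * g x) μ)
    (hmom : ∀ j ≤ s, ∫ x, x ^ j * g x ∂μ = 0) :
    ∫ x, P.eval x * g x ∂μ = 0 := by
  have hexpand : ∀ x, P.eval x * g x =
      ∑ j ∈ Finset.range (P.natDegree + 1), P.coeff j * (x ^ j * g x) := fun x => by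
    rw [eval_eq_sum_range, Finset.sum_mul]
    exact Finset.sum_congr rfl fun j _ => by ring
  have hjs : ∀ j ∈ Finset.range (P.natDegree + 1), j ≤ s := fun j hj => by
    have := Finset.mem_range.1 hj; omega
  simp_rw [hexpand]
  rw [integral_finsetSum _ fun j hj => (hint j (hjs j hj)).const_mul _]
  exact Finset.sum_eq_zero fun j hj => by rw [integral_const_mul, hmom j (hjs j hj), mul_zero]

theorem ae_eq_zero_of_eval_mul_ae_eq_zero {μ : Measure ℝ} [NullSingletonClass μ] {g : ℝ → ℝ}
    {P : ℝ[X]} (hP : P ≠ 0) (h : (fun x => P.eval x * g x) =ᵐ[μ] 0) : g =ᵐ[μ] 0 := by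
  have hroots : ∀ᵐ x ∂μ, x ∉ {x | P.IsRoot x} :=
    measure_eq_zero_iff_ae_notMem.1 ((finite_setOfPred_isRoot hP).measure_zero μ)
  filter_upwards [h, hroots] with x hx hxP
  exact (mul_eq_zero.1 hx).resolve_left hxP

theorem ae_eq_zero_of_moments_eq_zero_of_eval_mul_nonneg {μ : Measure ℝ} [NullSingletonClass μ]
    {K : Set ℝ} (hK : IsCompact K) {g : ℝ → ℝ} {s : ℕ} (hg : IntegrableOn g K μ)
    (hmom : ∀ j ≤ s, ∫ x in K, x ^ j * g x ∂μ = 0) {P : ℝ[X]} (hP0 : P ≠ 0)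
    (hPs : P.natDegree ≤ s) (hnonneg : ∀ᵐ x ∂μ.restrict K, 0 ≤ P.eval x * g x) :
    g =ᵐ[μ.restrict K] 0 := by
  have hint : ∀ j ≤ s, IntegrableOn (fun x => x ^ j * g x) K μ := fun j _ =>
    hg.continuousOn_mul (continuous_pow j).continuousOn hK
  have hzero : ∫ x in K, P.eval x * g x ∂μ = 0 :=
    integral_eval_mul_eq_zero_of_moments hPs hint hmom
  refine ae_eq_zero_of_eval_mul_ae_eq_zero hP0 ?_
  exact (integral_eq_zero_iff_of_nonneg_ae hnonneg
    (hg.continuousOn_mul P.continuous.continuousOn hK)).1 hzero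

theorem ae_restrict_Icc_nonneg_prod_sub_mul_of_alternating_sign {μ : Measure ℝ}
    [NullSingletonClass μ] {g : ℝ → ℝ} {ε : ℝ} {l : ℕ} {t : ℕ → ℝ} (hlt : ∀ i ≤ l, t i < t (i + 1))
    (hsign : ∀ i ≤ l, ∀ᵐ x ∂μ.restrict (Ioo (t i) (t (i + 1))), 0 ≤ (-1) ^ i * ε * g x) :
    ∀ᵐ x ∂μ.restrict (Icc (t 0) (t (l + 1))),
      0 ≤ (-1) ^ l * ε * (∏ j ∈ Finset.range l, (x - t (j + 1))) * g x := by
  have hmono : MonotoneOn t (Iic l) := monotoneOn_of_le_add_one ordConnected_Iic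
    fun i _ _ hi => (hlt i (by simp at hi; omega)).le
  have hsign' : ∀ᵐ x ∂μ, ∀ i ∈ Iic l, x ∈ Ioo (t i) (t (i + 1)) → 0 ≤ (-1) ^ i * ε * g x :=
    (Filter.eventually_all_finite (finite_Iic l)).2 fun i hi =>
      (ae_restrict_iff' measurableSet_Ioo).1 (hsign i hi)
  have hnodes : ∀ᵐ x ∂μ, x ∉ range t :=
    measure_eq_zero_iff_ae_notMem.1 ((countable_range t).measure_zero μ)
  filter_upwards [ae_restrict_mem measurableSet_Icc, ae_restrict_of_ae hsign',
    ae_restrict_of_ae hnodes] with x hxI hxs hxt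
  have hx0 : t 0 < x := hxI.1.lt_of_ne fun h => hxt ⟨0, h⟩
  have hx1 : x < t (l + 1) := hxI.2.lt_of_ne fun h => hxt ⟨l + 1, h.symm⟩
  obtain ⟨i, hil, hxi⟩ := exists_mem_Ioo_of_notMem_range t hxt l hx0 hx1
  have hsplit : (-1) ^ l * ε * (∏ j ∈ Finset.range l, (x - t (j + 1))) * g x =
      ((-1) ^ (l - i) * ∏ j ∈ Finset.range l, (x - t (j + 1))) * ((-1) ^ i * ε * g x) := by
    rw [← Nat.sub_add_cancel hil, pow_add, Nat.add_sub_cancel]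
    ring
  rw [hsplit]
  exact mul_nonneg (neg_one_pow_sub_mul_prod_sub_pos hmono hil hxi).le (hxs i hil hxi)

theorem vanishing_moments_many_sign_changes (s : ℕ) (g : ℝ → ℝ)
    (hg : IntegrableOn g (Set.Icc 0 1))
    (hg0 : ¬ g =ᵐ[volume.restrict (Set.Icc (0:ℝ) 1)] 0)
    (hmom : ∀ j ≤ s, (∫ x in (0:ℝ)..1, x ^ j * g x) = 0) :
    ∀ l ≤ s, ∀ t : ℕ → ℝ, t 0 = 0 → t (l + 1) = 1 → (∀ i ≤ l, t i < t (i + 1)) →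
      (∀ i, 1 ≤ i → i ≤ l → 0 < t i ∧ t i < 1) →
      ¬ ∃ ε : ℝ, (ε = 1 ∨ ε = -1) ∧
        ∀ i ≤ l, ∀ᵐ x ∂(volume.restrict (Set.Ioo (t i) (t (i + 1)))),
          0 ≤ (-1 : ℝ) ^ i * ε * g x := by
  rintro l hls t ht0 ht1 hlt - ⟨ε, hε, hsign⟩
  set P : ℝ[X] := C ((-1) ^ l * ε) * ∏ j ∈ Finset.range l, (X - C (t (j + 1))) with hP
  have hε0 : ε ≠ 0 := by rcases hε with rfl | rfl <;> norm_num
  have hP0 : P ≠ 0 := mul_ne_zero (C_ne_zero.2 (by simp [hε0]))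
    (monic_prod_of_monic _ _ fun j _ => monic_X_sub_C _).ne_zero
  have hPs : P.natDegree ≤ s := (natDegree_C_mul_le _ _).trans <| by
    rw [natDegree_prod_of_monic _ _ fun j _ => monic_X_sub_C _]
    simpa using hls
  have hmom' : ∀ j ≤ s, ∫ x in Icc (0 : ℝ) 1, x ^ j * g x = 0 := fun j hj => by
    rw [integral_Icc_eq_integral_Ioc, ← intervalIntegral.integral_of_le zero_le_one, hmom j hj]
  refine hg0 (ae_eq_zero_of_moments_eq_zero_of_eval_mul_nonneg isCompact_Icc hg hmom' hP0 hPs ?_)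
  have hPg := ae_restrict_Icc_nonneg_prod_sub_mul_of_alternating_sign (μ := volume) hlt hsign
  rw [ht0, ht1] at hPg
  simpa only [hP, eval_mul, eval_C, eval_prod, eval_sub, eval_X, mul_assoc] using hPg
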